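/- If a time-dependent vector field f on R^n is G-equivariant for a linear group action and the prior density q_Z is G-invariant, then the density of x = y(t₁) obtained by flowing samples z ∼ q_Z along y' = f(y, t) from t₀ to t₁ is G-invariant. -/

import Mathlib

/-!
Since `ρ g` is linear and `f` is equivariant, `t ↦ ρ g (y t)` solves the ODE whenever `y` does, so by
uniqueness of solutions the flow map `Φ` commutes with `ρ g`, and hence so does `Φ⁻¹`. This gives the
invariance of `qZ ∘ Φ⁻¹`; differentiating `Φ⁻¹ = ρ g ∘ Φ⁻¹ ∘ (ρ g)⁻¹` shows that `D(Φ⁻¹)(ρ g x)` is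
conjugate to `D(Φ⁻¹)(x)`, so the Jacobian factor is invariant as well.
-/

open Set

section ODE

variable {E : Type*} [NormedAddCommGroup E] [NormedSpace ℝ E]

def SolvesODEOn (f : E → ℝ → E) (s : Set ℝ) (y : ℝ → E) : Prop :=
  ∀ t ∈ s, HasDerivAt y (f (y t) t) t

variable {f : E → ℝ → E}

theorem SolvesODEOn.clm_comp {s : Set ℝ} {y : ℝ → E} (L : E →L[ℝ] E)
    (hL : ∀ z t, f (L z) t = L (f z t)) (hy : SolvesODEOn f s y) :
    SolvesODEOn f s (L ∘ y) := fun t ht => by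
  simpa only [Function.comp_apply, hL] using L.hasFDerivAt.comp_hasDerivAt t (hy t ht)

theorem flowMap_commute_of_equivariant {t₀ t₁ : ℝ} (Φ : E → E) (L : E →L[ℝ] E)
    (hL : ∀ z t, f (L z) t = L (f z t))
    (hflow : ∀ z, ∃ y : ℝ → E, y t₀ = z ∧ y t₁ = Φ z ∧ SolvesODEOn f (Icc t₀ t₁) y)
    (huniq : ∀ y₁ y₂ : ℝ → E, SolvesODEOn f (Icc t₀ t₁) y₁ → SolvesODEOn f (Icc t₀ t₁) y₂ →
      y₁ t₀ = y₂ t₀ → y₁ t₁ = y₂ t₁) :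
    Function.Commute Φ L := fun z => by
  obtain ⟨y, hy₀, hy₁, hy⟩ := hflow z
  obtain ⟨y', hy'₀, hy'₁, hy'⟩ := hflow (L z)
  have := huniq y' (L ∘ y) hy' (hy.clm_comp L hL) (by simp [hy₀, hy'₀])
  simpa [hy₁, hy'₁] using this

end ODE

theorem det_fderiv_apply_eq_of_commute {𝕜 E : Type*} [NontriviallyNormedField 𝕜]
    [NormedAddCommGroup E] [NormedSpace 𝕜 E] (L : E ≃L[𝕜] E) {ψ : E → E}
    (h : Function.Commute ψ L) (x : E) :
    (fderiv 𝕜 ψ (L x)).det = (fderiv 𝕜 ψ x).det := by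
  have hψ : ψ = L ∘ (ψ ∘ L.symm) := funext fun z => by
    simpa using h (L.symm z)
  have hD : fderiv 𝕜 ψ (L x) =
      (L : E →L[𝕜] E).comp ((fderiv 𝕜 ψ x).comp (L.symm : E →L[𝕜] E)) := by
    conv_lhs => rw [hψ]
    rw [L.comp_fderiv, L.symm.comp_right_fderiv, L.symm_apply_apply]
  rw [hD]
  exact LinearMap.det_conj (fderiv 𝕜 ψ x : E →ₗ[𝕜] E) L.toLinearEquiv

theorem equivariant_cnf_invariant_density_general
    {n : ℕ} {G : Type*} [Group G]
    (ρ : G →* ((Fin n → ℝ) ≃ₗ[ℝ] (Fin n → ℝ)))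
    (f : (Fin n → ℝ) → ℝ → (Fin n → ℝ))
    (heq : ∀ (g : G) (y : Fin n → ℝ) (t : ℝ), f (ρ g y) t = ρ g (f y t))
    (qZ : (Fin n → ℝ) → ℝ)
    (hinv : ∀ (g : G) (z : Fin n → ℝ), qZ (ρ g z) = qZ z)
    (t₀ t₁ : ℝ)
    (Φ : (Fin n → ℝ) ≃ (Fin n → ℝ))
    -- `Φ` is the flow map of the ODE from `t₀` to `t₁`
    (hflow : ∀ z : Fin n → ℝ, ∃ y : ℝ → (Fin n → ℝ),
      y t₀ = z ∧ y t₁ = Φ z ∧ ∀ t ∈ Set.Icc t₀ t₁, HasDerivAt y (f (y t) t) t)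
    -- uniqueness of solutions
    (huniq : ∀ y₁ y₂ : ℝ → (Fin n → ℝ),
      (∀ t ∈ Set.Icc t₀ t₁, HasDerivAt y₁ (f (y₁ t) t) t) →
      (∀ t ∈ Set.Icc t₀ t₁, HasDerivAt y₂ (f (y₂ t) t) t) →
      y₁ t₀ = y₂ t₀ → y₁ t₁ = y₂ t₁)
    (qX : (Fin n → ℝ) → ℝ)
    (hqX : ∀ x, qX x = qZ (Φ.symm x) * |(fderiv ℝ Φ.symm x).det|) :
    ∀ (g : G) (x : Fin n → ℝ), qX (ρ g x) = qX x := by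
  intro g x
  let L := (ρ g).toContinuousLinearEquiv
  have hΦ : Function.Commute Φ L := flowMap_commute_of_equivariant Φ L (heq g) hflow huniq
  have hΦsymm : Function.Commute Φ.symm L := hΦ.semiconj.inverse_left Φ.left_inv Φ.right_inv
  calc qX (L x) = qZ (L (Φ.symm x)) * |(fderiv ℝ Φ.symm (L x)).det| := by rw [hqX, hΦsymm x]
    _ = qX x := by rw [hqX, det_fderiv_apply_eq_of_commute L hΦsymm x, ← hinv g (Φ.symm x)]; rfl

/-- If the time-dependent vector field `f` is `G`-equivariant
for a linear action with `|det ρ(g)| = 1` and the prior density `qZ` is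
`G`-invariant, then the pushforward density along the flow `Φ` of `y' = f (y t) t`
from `t₀` to `t₁`, i.e. `qX x = qZ (Φ⁻¹ x) * |det D(Φ⁻¹)(x)|`, is `G`-invariant. -/
theorem equivariant_cnf_invariant_density
    {n : ℕ} {G : Type*} [Group G]
    (ρ : G →* ((Fin n → ℝ) ≃ₗ[ℝ] (Fin n → ℝ)))
    (hdet : ∀ g : G, |LinearMap.det ((ρ g : (Fin n → ℝ) ≃ₗ[ℝ] (Fin n → ℝ)) :
      (Fin n → ℝ) →ₗ[ℝ] (Fin n → ℝ))| = 1)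
    (f : (Fin n → ℝ) → ℝ → (Fin n → ℝ))
    (heq : ∀ (g : G) (y : Fin n → ℝ) (t : ℝ), f (ρ g y) t = ρ g (f y t))
    (qZ : (Fin n → ℝ) → ℝ)
    (hinv : ∀ (g : G) (z : Fin n → ℝ), qZ (ρ g z) = qZ z)
    (t₀ t₁ : ℝ)
    (Φ : (Fin n → ℝ) ≃ (Fin n → ℝ))
    (hΦ : Differentiable ℝ Φ)
    (hΦsymm : Differentiable ℝ Φ.symm)
    -- `Φ` is the flow map of the ODE from `t₀` to `t₁`
    (hflow : ∀ z : Fin n → ℝ, ∃ y : ℝ → (Fin n → ℝ),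
      y t₀ = z ∧ y t₁ = Φ z ∧ ∀ t ∈ Set.Icc t₀ t₁, HasDerivAt y (f (y t) t) t)
    -- uniqueness of solutions
    (huniq : ∀ y₁ y₂ : ℝ → (Fin n → ℝ),
      (∀ t ∈ Set.Icc t₀ t₁, HasDerivAt y₁ (f (y₁ t) t) t) →
      (∀ t ∈ Set.Icc t₀ t₁, HasDerivAt y₂ (f (y₂ t) t) t) →
      y₁ t₀ = y₂ t₀ → y₁ t₁ = y₂ t₁)
    (qX : (Fin n → ℝ) → ℝ)
    (hqX : ∀ x, qX x = qZ (Φ.symm x) * |(fderiv ℝ Φ.symm x).det|) :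
    ∀ (g : G) (x : Fin n → ℝ), qX (ρ g x) = qX x :=
  equivariant_cnf_invariant_density_general ρ f heq qZ hinv t₀ t₁ Φ hflow huniq qX hqX
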